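/- For every 0 < t1 < 1/4: the cubic p1 has at least one real root; every real root s of p1 satisfies s < 1/8; and the greatest real root t_{0,crit}(t1) of p1 is strictly positive. In particular 0 < t_{0,crit}(t1) < 1/8. -/
import Mathlib

noncomputable section

/-- The cubic polynomial `p1` whose greatest real root is `t_{0,crit}(t1)`. -/
def p1 (t1 s : ℝ) : ℝ :=
  8192*s^3 + 192*(64*t1 - 7)*s^2 - 48*(1 - 4*t1)^2*s + (108*t1 - 11)*(4*t1 - 1)^3

/-- For `0 < t1 < 1/4`: `p1` has a real root, every real root is `< 1/8`, and the
greatest real root `t_{0,crit}(t1)` exists and is strictly positive; in particular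
`0 < t_{0,crit}(t1) < 1/8`. -/
theorem t0crit_exists_pos_lt (t1 : ℝ) (ht1 : 0 < t1) (ht1' : t1 < 1/4) :
    (∃ s : ℝ, p1 t1 s = 0) ∧
    (∀ s : ℝ, p1 t1 s = 0 → s < 1/8) ∧
    (∃ tc : ℝ, IsGreatest {s : ℝ | p1 t1 s = 0} tc ∧ 0 < tc ∧ tc < 1/8) := by
  have hu : 0 < 1 - 4*t1 := by linarith
  -- value at 1/8 is positive
  have h18 : 0 < p1 t1 (1/8) := by
    have hid : p1 t1 (1/8) =
        (4*t1)^2 * (27*(1-4*t1)^2 + 38*(1-4*t1) + 43) := by unfold p1; ring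
    rw [hid]
    have h1 : 0 < (4*t1)^2 := by positivity
    nlinarith [sq_nonneg (1-4*t1)]
  -- p1 is positive on [1/8, ∞)
  have hge : ∀ s : ℝ, 1/8 ≤ s → 0 < p1 t1 s := by
    intro s hs
    have key : p1 t1 s = p1 t1 (1/8) + (s - 1/8) * (3456*t1 - 768*t1^2)
        + (s - 1/8)^2 * (8192*s + 12288*t1 + 704) := by unfold p1; ring
    rw [key]
    have h1 : 0 ≤ (s - 1/8) * (3456*t1 - 768*t1^2) := by
      apply mul_nonneg (by linarith); nlinarith
    have h2 : 0 ≤ (s - 1/8)^2 * (8192*s + 12288*t1 + 704) := by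
      apply mul_nonneg (sq_nonneg _); nlinarith
    linarith
  -- every root is < 1/8
  have hroots : ∀ s : ℝ, p1 t1 s = 0 → s < 1/8 := by
    intro s hsz
    by_contra h
    push_neg at h
    exact absurd hsz (ne_of_gt (hge s h))
  -- value at a := (1-4t1)^2/8 is negative
  set a : ℝ := (1-4*t1)^2/8 with ha_def
  have ha : p1 t1 a < 0 := by
    have hid : p1 t1 a = -16 * (1-4*t1)^3 * (4*t1)^3 := by unfold p1; rw [ha_def]; ring
    rw [hid]
    have h1 : 0 < (1-4*t1)^3 := by positivity
    have h2 : 0 < (4*t1)^3 := by positivity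
    nlinarith
  have hapos : 0 < a := by positivity
  have hale : a ≤ 1/8 := by rw [ha_def]; nlinarith
  have hcont : Continuous (p1 t1) := by unfold p1; continuity
  -- root via IVT
  obtain ⟨r0, hr0mem, hr0⟩ : ∃ r0 ∈ Set.Icc a (1/8 : ℝ), p1 t1 r0 = 0 := by
    have h := intermediate_value_Icc hale hcont.continuousOn
    have : (0:ℝ) ∈ Set.Icc (p1 t1 a) (p1 t1 (1/8)) := ⟨le_of_lt ha, le_of_lt h18⟩
    obtain ⟨r0, hr0m, hr0⟩ := h this
    exact ⟨r0, hr0m, hr0⟩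
  have hr0pos : 0 < r0 := lt_of_lt_of_le hapos hr0mem.1
  have hr0lt : r0 < 1/8 := hroots r0 hr0
  refine ⟨⟨r0, hr0⟩, hroots, ?_⟩
  -- greatest root
  set S : Set ℝ := {s : ℝ | p1 t1 s = 0} with hS
  set K : Set ℝ := S ∩ Set.Icc r0 (1/8) with hK_def
  have hScl : IsClosed S := isClosed_eq hcont continuous_const
  have hKcl : IsClosed K := hScl.inter isClosed_Icc
  have hKcpt : IsCompact K :=
    (isCompact_Icc (a := r0) (b := (1/8:ℝ))).of_isClosed_subset hKcl
      Set.inter_subset_right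
  have hr0K : r0 ∈ K := ⟨hr0, le_refl _, le_of_lt hr0lt⟩
  have hKne : K.Nonempty := ⟨r0, hr0K⟩
  obtain ⟨htcK⟩ := hKcpt.sSup_mem hKne
  set tc := sSup K with htc_def
  have htcK' : tc ∈ K := hKcpt.sSup_mem hKne
  have hr0tc : r0 ≤ tc := le_csSup hKcpt.bddAbove hr0K
  refine ⟨tc, ⟨htcK'.1, ?_⟩, lt_of_lt_of_le hr0pos hr0tc, hroots tc htcK'.1⟩
  intro s hsS
  rcases le_or_gt s r0 with h | h
  · exact le_trans h hr0tc
  · exact le_csSup hKcpt.bddAbove ⟨hsS, le_of_lt h, le_of_lt (hroots s hsS)⟩
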